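/- arXiv:math/0610231 — 3 statements merged into one kernel-verified Lean document; each statement's English description precedes it below -/
import Mathlib

section
/- The normal closure in SL(3,ℤ) of the cyclic subgroup of order 3 generated by the permutation matrix of the 3-cycle (i.e., the matrix with rows (0,0,1),(1,0,0),(0,1,0)) is all of SL(3,ℤ). -/
/-!
`SL(3,ℤ)` is generated by its two block copies of `SL(2,ℤ)`, on the coordinates `{0,1}` and
`{1,2}`: two Bezout steps inside these blocks move the first column of any matrix to `e₀`, and a
matrix with first column `e₀` is a lower-right block matrix times the elementary matrices `E₀₁`
and `E₀₂ = ⁅E₀₁, E₁₂⁆`. Conjugation by the 3-cycle `c` carries the upper-left block onto the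
lower-right one, so it remains to put `S` and `T` of the upper-left `SL(2,ℤ)` into the normal
closure of `c`; this is a short computation with commutators of `c` and elementary matrices.
-/

/-- The permutation matrix of the 3-cycle `e₁ ↦ e₂ ↦ e₃ ↦ e₁`, as an element of `SL(3,ℤ)`. -/
def threeCycleSL3 : Matrix.SpecialLinearGroup (Fin 3) ℤ :=
  ⟨!![0, 0, 1; 1, 0, 0; 0, 1, 0], by rw [Matrix.det_fin_three]; decide⟩

open Matrix MatrixGroups ModularGroup
open scoped commutatorElement

lemma Subgroup.commutatorElement_mem {G : Type*} [Group G] {H : Subgroup G} {a b : G}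
    (ha : a ∈ H) (hb : b ∈ H) : ⁅a, b⁆ ∈ H :=
  mul_mem (mul_mem (mul_mem ha hb) (inv_mem ha)) (inv_mem hb)

namespace Subgroup.Normal

variable {G : Type*} [Group G] {N : Subgroup G}

lemma commutatorElement_mem_left (hN : N.Normal) {a : G} (ha : a ∈ N) (g : G) : ⁅a, g⁆ ∈ N := by
  rw [commutatorElement_def, mul_assoc, mul_assoc]
  exact mul_mem ha (by simpa [mul_assoc] using hN.conj_mem _ (inv_mem ha) g)

lemma commutatorElement_mem_right (hN : N.Normal) {a : G} (ha : a ∈ N) (g : G) : ⁅g, a⁆ ∈ N :=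
  mul_mem (hN.conj_mem a ha g) (inv_mem ha)

end Subgroup.Normal

lemma Int.exists_SL2_mulVec_eq_gcd (a b : ℤ) :
    ∃ M : SL(2, ℤ), (M : Matrix (Fin 2) (Fin 2) ℤ) *ᵥ ![a, b] = ![(a.gcd b : ℤ), 0] := by
  obtain hab | hab := eq_or_ne (a.gcd b) 0
  · obtain ⟨rfl, rfl⟩ := Int.gcd_eq_zero_iff.mp hab
    exact ⟨1, by simp⟩
  have hBezout := Int.gcd_eq_gcd_ab a b
  obtain ⟨a', ha⟩ := Int.gcd_dvd_left a b
  obtain ⟨b', hb⟩ := Int.gcd_dvd_right a b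
  set g : ℤ := (a.gcd b : ℤ)
  have hg : g ≠ 0 := by simpa [g] using hab
  have hdet : a.gcdA b * a' + a.gcdB b * b' = 1 := by
    apply mul_left_cancel₀ hg
    linear_combination -hBezout - a.gcdA b * ha - a.gcdB b * hb
  refine ⟨⟨!![a.gcdA b, a.gcdB b; -b', a'], by simpa [det_fin_two] using hdet⟩, ?_⟩
  simp only [mulVec_fin_two, of_apply, cons_val', cons_val_zero, cons_val_one,
    cons_val_fin_one, vecCons_inj, and_true]
  constructor
  · linear_combination hBezout.symm
  · linear_combination a' * hb - b' * ha

namespace Matrix.SpecialLinearGroup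

section CommRing

variable {R : Type*} [CommRing R]

def upperLeftSL2 : SL(2, R) →* SL(3, R) where
  toFun M := ⟨!![M 0 0, M 0 1, 0; M 1 0, M 1 1, 0; 0, 0, 1], by
    simpa [-det_coe, det_fin_three, det_fin_two] using M.det_coe⟩
  map_one' := by ext i j; fin_cases i <;> fin_cases j <;> rfl
  map_mul' M N := Subtype.ext <| by
    change _ = (_ : Matrix (Fin 3) (Fin 3) R) * _
    ext i j
    fin_cases i <;> fin_cases j <;> simp [mul_apply, Fin.sum_univ_succ]

def lowerRightSL2 : SL(2, R) →* SL(3, R) where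
  toFun M := ⟨!![1, 0, 0; 0, M 0 0, M 0 1; 0, M 1 0, M 1 1], by
    simpa [-det_coe, det_fin_three, det_fin_two] using M.det_coe⟩
  map_one' := by ext i j; fin_cases i <;> fin_cases j <;> rfl
  map_mul' M N := Subtype.ext <| by
    change _ = (_ : Matrix (Fin 3) (Fin 3) R) * _
    ext i j
    fin_cases i <;> fin_cases j <;> simp [mul_apply, Fin.sum_univ_succ]

@[simp] lemma coe_upperLeftSL2 (M : SL(2, R)) :
    (upperLeftSL2 M : Matrix (Fin 3) (Fin 3) R) = !![M 0 0, M 0 1, 0; M 1 0, M 1 1, 0; 0, 0, 1] :=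
  rfl

@[simp] lemma coe_lowerRightSL2 (M : SL(2, R)) :
    (lowerRightSL2 M : Matrix (Fin 3) (Fin 3) R) = !![1, 0, 0; 0, M 0 0, M 0 1; 0, M 1 0, M 1 1] :=
  rfl

variable (R) in
def blockSL2 : Subgroup SL(3, R) := upperLeftSL2.range ⊔ lowerRightSL2.range

lemma commutatorElement_upperLeftSL2_lowerRightSL2 (a b : R) :
    ⁅upperLeftSL2 (transvection zero_ne_one a), lowerRightSL2 (transvection zero_ne_one b)⁆ =
      transvection (by decide : (0 : Fin 3) ≠ 2) (a * b) := by
  simp only [commutatorElement_def, ← map_inv, transvection_inv]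
  ext i j
  fin_cases i <;> fin_cases j <;>
    simp [coe_mul, transvection_coe, mul_apply, Fin.sum_univ_succ]

lemma mem_blockSL2_of_firstColumn (A : SL(3, R)) (h00 : A 0 0 = 1) (h10 : A 1 0 = 0)
    (h20 : A 2 0 = 0) : A ∈ blockSL2 R := by
  obtain ⟨P, hP⟩ : ∃ P : SL(2, R), P = !![A 1 1, A 1 2; A 2 1, A 2 2] :=
    ⟨⟨_, by simpa [-det_coe, det_fin_three, det_fin_two, h00, h10, h20] using A.det_coe⟩, rfl⟩
  have hA : A = lowerRightSL2 P * upperLeftSL2 (transvection zero_ne_one (A 0 1)) *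
      transvection (by decide : (0 : Fin 3) ≠ 2) (A 0 2) := by
    ext i j
    fin_cases i <;> fin_cases j <;>
      simp [hP, coe_mul, transvection_coe, mul_apply, Fin.sum_univ_succ, one_apply, h00, h10, h20]
  have h02 : transvection (by decide : (0 : Fin 3) ≠ 2) (A 0 2) ∈ blockSL2 R := by
    rw [← mul_one (A 0 2), ← commutatorElement_upperLeftSL2_lowerRightSL2]
    exact Subgroup.commutatorElement_mem (Subgroup.mem_sup_left ⟨_, rfl⟩)
      (Subgroup.mem_sup_right ⟨_, rfl⟩)
  rw [hA]
  exact mul_mem (mul_mem (Subgroup.mem_sup_right ⟨_, rfl⟩) (Subgroup.mem_sup_left ⟨_, rfl⟩)) h02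

end CommRing

lemma exists_mem_blockSL2_mul_firstColumn (A : SL(3, ℤ)) :
    ∃ h ∈ blockSL2 ℤ, (h * A) 0 0 = 1 ∧ (h * A) 1 0 = 0 ∧ (h * A) 2 0 = 0 := by
  obtain ⟨M, hM⟩ := Int.exists_SL2_mulVec_eq_gcd (A 1 0) (A 2 0)
  obtain ⟨M', hM'⟩ := Int.exists_SL2_mulVec_eq_gcd (A 0 0) ((A 1 0).gcd (A 2 0))
  simp only [mulVec_fin_two, cons_val_zero, cons_val_one, vecCons_inj, and_true] at hM hM'
  obtain ⟨hM₀, hM₁⟩ := hM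
  obtain ⟨hM'₀, hM'₁⟩ := hM'
  set d : ℤ := ((A 0 0).gcd ((A 1 0).gcd (A 2 0)) : ℤ)
  set B := upperLeftSL2 M' * lowerRightSL2 M * A
  have hB : B 0 0 = d ∧ B 1 0 = 0 ∧ B 2 0 = 0 := by
    simp only [B, coe_mul, mul_apply, Fin.sum_univ_three, coe_upperLeftSL2, coe_lowerRightSL2,
      of_apply, cons_val', cons_val_zero, cons_val_one, cons_val_two, cons_val_fin_one, tail_cons,
      vecHead, zero_mul, one_mul, mul_zero, mul_one, add_zero, zero_add]
    refine ⟨?_, ?_, hM₁⟩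
    · linear_combination hM'₀ + M' 0 1 * hM₀
    · linear_combination hM'₁ + M' 1 1 * hM₀
  have hd : d = 1 := by
    have hdet := B.det_coe
    rw [det_fin_three, hB.1, hB.2.1, hB.2.2] at hdet
    exact Int.eq_one_of_mul_eq_one_right (b := B 1 1 * B 2 2 - B 1 2 * B 2 1) (by positivity)
      (by linear_combination hdet)
  rw [hd] at hB
  exact ⟨_, mul_mem (Subgroup.mem_sup_left ⟨M', rfl⟩) (Subgroup.mem_sup_right ⟨M, rfl⟩), hB⟩

lemma blockSL2_eq_top : blockSL2 ℤ = ⊤ := by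
  refine eq_top_iff.2 fun A _ ↦ ?_
  obtain ⟨h, hh, h00, h10, h20⟩ := exists_mem_blockSL2_mul_firstColumn A
  simpa using mul_mem (inv_mem hh) (mem_blockSL2_of_firstColumn _ h00 h10 h20)

end Matrix.SpecialLinearGroup

open Matrix.SpecialLinearGroup

lemma threeCycleSL3_mul_upperLeftSL2 (M : SL(2, ℤ)) :
    threeCycleSL3 * upperLeftSL2 M = lowerRightSL2 M * threeCycleSL3 := by
  ext i j
  simp only [coe_mul, mul_apply, Fin.sum_univ_succ]
  fin_cases i <;> fin_cases j <;> simp [threeCycleSL3]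

lemma range_upperLeftSL2_le_of_threeCycleSL3_mem {N : Subgroup SL(3, ℤ)} (hN : N.Normal)
    (hc : threeCycleSL3 ∈ N) : upperLeftSL2.range ≤ N := by
  set c := threeCycleSL3
  set t := upperLeftSL2 T
  have hx : ⁅⁅t, c⁆, t⁆ ∈ N := hN.commutatorElement_mem_left (hN.commutatorElement_mem_right hc t) t
  set x := ⁅⁅t, c⁆, t⁆
  -- `t = E₀₁(1)` and `x = E₀₂(1)`, whose conjugates by `c²` and `c` are `E₂₁(1)` and `E₁₀(1)`;
  -- then `E₀₁ = ⁅E₀₂, E₂₁⁆` and `S = E₀₁(-1) E₁₀(1) E₀₁(-1)`.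
  have ht : t ∈ N := by
    rw [show t = ⁅x, c * c * x * (c * c)⁻¹⁆ by decide]
    exact hN.commutatorElement_mem_left hx _
  have hS : upperLeftSL2 S ∈ N := by
    rw [show upperLeftSL2 S = t⁻¹ * (c * x * c⁻¹) * t⁻¹ by decide]
    exact mul_mem (mul_mem (inv_mem ht) (hN.conj_mem x hx c)) (inv_mem ht)
  rw [MonoidHom.range_eq_map, ← SpecialLinearGroup.SL2Z_generators, MonoidHom.map_closure,
    Subgroup.closure_le]
  rintro _ ⟨M, rfl | rfl, rfl⟩
  exacts [hS, ht]

lemma blockSL2_le_of_threeCycleSL3_mem {N : Subgroup SL(3, ℤ)} (hN : N.Normal)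
    (hc : threeCycleSL3 ∈ N) : blockSL2 ℤ ≤ N := by
  refine sup_le (range_upperLeftSL2_le_of_threeCycleSL3_mem hN hc) ?_
  rintro _ ⟨M, rfl⟩
  rw [eq_mul_inv_of_mul_eq (threeCycleSL3_mul_upperLeftSL2 M).symm]
  exact hN.conj_mem _ (range_upperLeftSL2_le_of_threeCycleSL3_mem hN hc ⟨M, rfl⟩) _

/-- The normal closure in `SL(3,ℤ)` of the cyclic subgroup of order 3 generated by the
permutation matrix of the 3-cycle is all of `SL(3,ℤ)`. -/
theorem normalClosure_of_threeCycle_matrix_eq_top :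
    Subgroup.normalClosure ({threeCycleSL3} : Set (Matrix.SpecialLinearGroup (Fin 3) ℤ)) = ⊤ := by
  rw [eq_top_iff, ← blockSL2_eq_top]
  exact blockSL2_le_of_threeCycleSL3_mem Subgroup.normalClosure_normal
    (Subgroup.subset_normalClosure rfl)
end

section
/- If Γ₀ and Γ₁ are infinite groups, then the free product Γ₀ * Γ₁ is an ICC group: every element other than the identity has an infinite conjugacy class. -/
/-!
In a free product, a nontrivial element `a` of a factor `G i` commutes only with elements of
`G i`. Write `g ∉ G i` as a reduced word. If neither its first nor its last letter lies in `G i`,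
the reduced words of `a * g` and `g * a` start in different factors. If only the last letter
lies in `G i`, cutting it off replaces `a` by a conjugate and reduces to the previous case; if the
first letter `h` lies in `G i`, the same applies to `h⁻¹ * g`, which is `≠ 1` as `g ∉ G i`.
Hence for `g ≠ 1` one of the two factors, say `G i`, meets the centraliser of `g` trivially, so
`m ↦ m * g * m⁻¹` is injective on the infinite group `G i`.
-/

open Monoid

namespace Monoid.CoprodI

section Monoid

variable {ι : Type*} {M : ι → Type*} [∀ i, Monoid (M i)]

theorem exists_neWord_prod_eq {g : CoprodI M} (hg : g ≠ 1) :
    ∃ (i j : ι) (w : NeWord M i j), w.prod = g := by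
  classical
  obtain ⟨i, j, w, hw⟩ := NeWord.of_word (Word.equiv g) fun h => hg <| by
    rw [← Word.equiv.symm_apply_apply g, h]; rfl
  exact ⟨i, j, w, by rw [NeWord.prod, hw]; exact Word.equiv.symm_apply_apply g⟩

theorem NeWord.eq_of_prod_eq {i j k l : ι} (w : NeWord M i j) (w' : NeWord M k l)
    (h : w.prod = w'.prod) : i = k := by
  classical
  have hw : w.toWord = w'.toWord := Word.equiv.symm.injective h
  have := congrArg (fun v : Word M => v.toList.head?) hw
  simp only [NeWord.toWord, NeWord.toList_head?, Option.some.injEq] at this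
  exact congrArg Sigma.fst this

theorem NeWord.prod_eq_of_head_or_of_head_mul {i k : ι} (w : NeWord M i k) :
    (i = k ∧ w.prod = of w.head) ∨
      ∃ (j : ι) (u : NeWord M j k), j ≠ i ∧ w.prod = of w.head * u.prod := by
  induction w with
  | singleton x hx => exact .inl ⟨rfl, NeWord.prod_singleton x hx⟩
  | append w₁ hne w₂ ih₁ _ =>
    right
    rcases ih₁ with ⟨rfl, h⟩ | ⟨j, u, hj, h⟩
    · exact ⟨_, w₂, hne.symm, by simp [h]⟩
    · exact ⟨j, u.append hne w₂, hj, by simp [h, mul_assoc]⟩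

theorem of_eq_one_of_of_eq_of {i j : ι} (hij : i ≠ j) {x : M i} {y : M j}
    (h : (of x : CoprodI M) = of y) : x = 1 := by
  by_contra hx
  have hy : y ≠ 1 := by rintro rfl; exact hx (of_injective i (by simpa using h))
  exact hij (NeWord.eq_of_prod_eq (.singleton x hx) (.singleton y hy) (by simpa using h))

end Monoid

section Group

variable {ι : Type*} {G : ι → Type*} [∀ i, Group (G i)]

theorem of_mul_prod_ne_prod_mul_of_of_ne {i j k : ι} (w : NeWord G j k) (hj : j ≠ i)
    (hk : k ≠ i) {a a' : G i} (ha : a ≠ 1) (ha' : a' ≠ 1) :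
    of a' * w.prod ≠ w.prod * of a := fun h =>
  hj <| Eq.symm <| NeWord.eq_of_prod_eq ((NeWord.singleton a' ha').append hj.symm w)
    (w.append hk (NeWord.singleton a ha)) (by simp [h])

theorem of_mul_prod_ne_prod_mul_of {i j k : ι} (w : NeWord G j k) (hj : j ≠ i)
    {a a' : G i} (ha : a ≠ 1) (ha' : a' ≠ 1) : of a' * w.prod ≠ w.prod * of a := by
  rcases eq_or_ne k i with rfl | hk
  · rcases w.inv.prod_eq_of_head_or_of_head_mul with ⟨hkj, -⟩ | ⟨l, u, hl, hu⟩
    · exact absurd hkj.symm hj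
    · have hw : w.prod = u.inv.prod * of w.last := by
        simpa [mul_inv_rev] using congrArg (·⁻¹) hu
      intro h
      refine of_mul_prod_ne_prod_mul_of_of_ne u.inv hj hl (a := w.last * a * w.last⁻¹)
        (by simpa using ha) ha' ?_
      rw [hw] at h
      simp only [map_mul, map_inv]
      calc of a' * u.inv.prod = (of a' * (u.inv.prod * of w.last)) * (of w.last)⁻¹ := by group
        _ = u.inv.prod * (of w.last * of a * (of w.last)⁻¹) := by rw [h]; group
  · exact of_mul_prod_ne_prod_mul_of_of_ne w hj hk ha ha'

theorem mem_range_of_of_mul_eq_mul_of {i : ι} {a a' : G i} (ha : a ≠ 1) {g : CoprodI G}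
    (h : of a' * g = g * of a) : g ∈ (of : G i →* CoprodI G).range := by
  have ha' : a' ≠ 1 := by
    rintro rfl
    exact ha (of_injective i (by simpa using h))
  rcases eq_or_ne g 1 with rfl | hg
  · exact one_mem _
  obtain ⟨j, k, w, rfl⟩ := exists_neWord_prod_eq hg
  rcases eq_or_ne j i with rfl | hj
  · rcases w.prod_eq_of_head_or_of_head_mul with ⟨-, hw⟩ | ⟨l, u, hl, hw⟩
    · exact ⟨w.head, hw.symm⟩
    · refine absurd ?_ (of_mul_prod_ne_prod_mul_of u hl (a' := w.head⁻¹ * a' * w.head) ha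
        (by simpa using (conj_eq_one_iff (a := w.head⁻¹)).not.mpr ha'))
      rw [hw] at h
      simp only [map_mul, map_inv]
      calc (of w.head)⁻¹ * of a' * of w.head * u.prod
          = (of w.head)⁻¹ * (of a' * (of w.head * u.prod)) := by group
        _ = u.prod * of a := by rw [h]; group
  · exact absurd h (of_mul_prod_ne_prod_mul_of w hj ha ha')

theorem forall_commute_eq_one_or {i j : ι} (hij : i ≠ j) {g : CoprodI G} (hg : g ≠ 1) :
    (∀ a : G i, Commute (of a) g → a = 1) ∨ ∀ b : G j, Commute (of b) g → b = 1 := by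
  by_contra! ⟨⟨a, hag, ha⟩, ⟨b, hbg, hb⟩⟩
  obtain ⟨x, rfl⟩ := mem_range_of_of_mul_eq_mul_of ha hag.eq
  obtain ⟨y, hy⟩ := mem_range_of_of_mul_eq_mul_of hb hbg.eq
  exact hg (by rw [of_eq_one_of_of_eq_of hij hy.symm, map_one])

end Group

end Monoid.CoprodI

theorem MonoidHom.infinite_range_conj_of_commute {H K : Type*} [Group H] [Group K] [Infinite H]
    (f : H →* K) {g : K} (hf : ∀ a, Commute (f a) g → a = 1) :
    (Set.range fun x : K => x * g * x⁻¹).Infinite := by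
  have hinj : Function.Injective fun a => f a * g * (f a)⁻¹ := by
    intro a b hab
    dsimp only at hab
    have hcomm : Commute (f (b⁻¹ * a)) g := by
      rw [map_mul, map_inv]
      calc (f b)⁻¹ * f a * g = (f b)⁻¹ * (f a * g * (f a)⁻¹) * f a := by group
        _ = g * ((f b)⁻¹ * f a) := by rw [hab]; group
    exact (inv_mul_eq_one.mp (hf _ hcomm)).symm
  exact (Set.infinite_range_of_injective hinj).mono (Set.range_comp_subset_range f _)

theorem MulEquiv.infinite_range_conj_iff {G H : Type*} [Group G] [Group H] (e : G ≃* H) (g : G) :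
    (Set.range fun x : H => x * e g * x⁻¹).Infinite ↔
      (Set.range fun x : G => x * g * x⁻¹).Infinite := by
  have : (Set.range fun x : H => x * e g * x⁻¹) =
      e '' Set.range fun x : G => x * g * x⁻¹ := by
    rw [← Set.range_comp, ← e.symm.surjective.range_comp]
    congr 1
    ext x
    simp
  rw [this, Set.infinite_image_iff e.injective.injOn]

namespace Monoid.CoprodI

theorem infinite_range_conj {ι : Type*} {G : ι → Type*} [∀ i, Group (G i)] {i j : ι}
    (hij : i ≠ j) [Infinite (G i)] [Infinite (G j)] {g : CoprodI G} (hg : g ≠ 1) :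
    (Set.range fun x : CoprodI G => x * g * x⁻¹).Infinite :=
  (forall_commute_eq_one_or hij hg).elim (of : G i →* _).infinite_range_conj_of_commute
    (of : G j →* _).infinite_range_conj_of_commute

def mulEquivCoprod (M : Bool → Type*) [∀ b, Monoid (M b)] :
    CoprodI M ≃* Coprod (M false) (M true) :=
  (CoprodI.lift fun | false => Coprod.inl | true => Coprod.inr).toMulEquiv
    (Coprod.lift of of)
    (ext_hom _ _ fun b => by cases b <;> ext <;> simp)
    (Coprod.hom_ext (by ext; simp) (by ext; simp))

end Monoid.CoprodI

universe u v

-- `CoprodI` needs a family of types in a single universe.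
def uliftFamily (M : Type u) (N : Type v) : Bool → Type (max u v)
  | false => ULift.{v} M
  | true => ULift.{u} N

instance (M : Type u) (N : Type v) [Group M] [Group N] :
    ∀ b, Group (uliftFamily M N b)
  | false => inferInstanceAs (Group (ULift M))
  | true => inferInstanceAs (Group (ULift N))

instance (M : Type u) (N : Type v) [Infinite M] [Infinite N] :
    ∀ b, Infinite (uliftFamily M N b)
  | false => inferInstanceAs (Infinite (ULift M))
  | true => inferInstanceAs (Infinite (ULift N))

def Monoid.Coprod.mulEquivCoprodI (M : Type u) (N : Type v) [Group M] [Group N] :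
    Coprod M N ≃* CoprodI (uliftFamily M N) :=
  (MulEquiv.coprodCongr MulEquiv.ulift.symm MulEquiv.ulift.symm).trans
    (CoprodI.mulEquivCoprod _).symm

/-- The free product of two infinite groups is ICC: every non-identity element has an
infinite conjugacy class. -/
theorem freeProduct_of_infinite_groups_is_ICC
    (Γ₀ Γ₁ : Type*) [Group Γ₀] [Group Γ₁] [Infinite Γ₀] [Infinite Γ₁] :
    ∀ g : Monoid.Coprod Γ₀ Γ₁, g ≠ 1 →
      (Set.range fun h : Monoid.Coprod Γ₀ Γ₁ => h * g * h⁻¹).Infinite := by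
  intro g hg
  let e := Coprod.mulEquivCoprodI Γ₀ Γ₁
  rw [← e.infinite_range_conj_iff]
  exact CoprodI.infinite_range_conj Bool.false_ne_true (e.map_ne_one_iff.mpr hg)
end

section
/- Let π be a unitary representation of a group G on a Hilbert space H, let P be the orthogonal projection of H onto the subspace of G-fixed vectors {ξ : π(g)ξ = ξ for all g ∈ G}, and let ξ ∈ H. If η is an element of minimal norm in the closed convex hull C of the orbit {π(g)ξ : g ∈ G}, then η = Pξ; in particular such a minimal-norm element exists, is unique, and is G-fixed. -/
/-! The closed convex hull `C` of the orbit is invariant under the isometries `π g`, so `π g`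
maps a minimal-norm element of `C` to another one; since the norm of a Hilbert space is strictly
convex, that element is unique, hence `G`-fixed. For a fixed `ζ`,
`⟪ζ, π g ξ⟫ = ⟪π g ζ, π g ξ⟫ = ⟪ζ, ξ⟫`, so the orbit lies in the closed affine subspace
`ξ + Kᗮ`, and so does `C`. -/

open Set

section ClosedConvexHull

variable {𝕜 E F : Type*} [Ring 𝕜] [PartialOrder 𝕜]
  [AddCommGroup E] [Module 𝕜 E] [TopologicalSpace E]

theorem Set.MapsTo.closedConvexHull [AddCommGroup F] [Module 𝕜 F] [TopologicalSpace F]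
    {s : Set E} {t : Set F} {f : E →ₗ[𝕜] F} (hf : Continuous f) (h : MapsTo f s t) :
    MapsTo f (closedConvexHull 𝕜 s) (closedConvexHull 𝕜 t) :=
  closedConvexHull_min (h.mono_right subset_closedConvexHull)
    (convex_closedConvexHull.linear_preimage f) (isClosed_closedConvexHull.preimage hf)

theorem sub_mem_of_mem_closedConvexHull [IsTopologicalAddGroup E] [T1Space E]
    {s : Set E} {x y : E} {W : Submodule 𝕜 E} (hW : IsClosed (W : Set E))
    (hs : ∀ z ∈ s, z - x ∈ W) (hy : y ∈ closedConvexHull 𝕜 s) : y - x ∈ W := by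
  let A := AffineSubspace.mk' x W
  have hA : closedConvexHull 𝕜 s ⊆ A :=
    closedConvexHull_min (fun z hz => AffineSubspace.mem_mk'.2 (hs z hz)) A.convex
      (A.isClosed_direction_iff.1 (by rwa [AffineSubspace.direction_mk']))
  exact AffineSubspace.mem_mk'.1 (hA hy)

end ClosedConvexHull

section MinimalNorm

variable {E : Type*} [NormedAddCommGroup E] [NormedSpace ℝ E] {C : Set E}

theorem Convex.eq_of_isMinOn_norm [StrictConvexSpace ℝ E] (hC : Convex ℝ C) {x y : E}
    (hx : x ∈ C) (hy : y ∈ C) (hxmin : IsMinOn (‖·‖) C x) (hymin : IsMinOn (‖·‖) C y) :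
    x = y := by
  by_contra hne
  have hmid : ‖(1 / 2 : ℝ) • x + (1 / 2 : ℝ) • y‖ < ‖x‖ :=
    norm_combo_lt_of_ne le_rfl (hymin hx) hne (by norm_num) (by norm_num) (by norm_num)
  exact hmid.not_ge (hxmin (hC hx hy (by norm_num) (by norm_num) (by norm_num)))

theorem Convex.exists_isMinOn_norm [InnerProductSpaceable E] (hC : Convex ℝ C)
    (hne : C.Nonempty) (hc : IsComplete C) : ∃ v ∈ C, IsMinOn (‖·‖) C v := by
  let _ : InnerProductSpace ℝ E :=
    .ofNorm ℝ (InnerProductSpaceable.parallelogram_identity (E := E))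
  obtain ⟨v, hvC, hv⟩ := exists_norm_eq_iInf_of_complete_convex hne hc hC 0
  refine ⟨v, hvC, fun w hw => ?_⟩
  have hbdd : BddBelow (range fun w : C => ‖(0 : E) - w‖) :=
    ⟨0, by rintro _ ⟨w, rfl⟩; exact norm_nonneg _⟩
  have hle := ciInf_le hbdd ⟨w, hw⟩
  rw [← hv] at hle
  simpa using hle

end MinimalNorm

section UnitaryRepresentation

variable {G H : Type*} [Monoid G] [NormedAddCommGroup H] [InnerProductSpace ℂ H]
  (π : G →* (H ≃ₗᵢ[ℂ] H)) (ξ : H)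

theorem mapsTo_closedConvexHull_orbit (g : G) :
    MapsTo (π g) (closedConvexHull ℝ (range fun h => π h ξ))
      (closedConvexHull ℝ (range fun h => π h ξ)) :=
  Set.MapsTo.closedConvexHull (f := (π g : H →ₗ[ℂ] H).restrictScalars ℝ) (π g).continuous
    (by rintro _ ⟨h, rfl⟩; exact ⟨g * h, by simp⟩)

theorem apply_eq_of_isMinOn_norm_closedConvexHull_orbit {η : H}
    (hη : η ∈ closedConvexHull ℝ (range fun h => π h ξ))
    (hmin : IsMinOn (‖·‖) (closedConvexHull ℝ (range fun h => π h ξ)) η) (g : G) :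
    π g η = η :=
  haveI : InnerProductSpaceable H := InnerProductSpace.toInnerProductSpaceable ℂ
  convex_closedConvexHull.eq_of_isMinOn_norm (mapsTo_closedConvexHull_orbit π ξ g hη) hη
    (fun ζ hζ => by simpa using hmin hζ) hmin

theorem sub_apply_mem_orthogonal {K : Submodule ℂ H} (hK : ∀ ζ ∈ K, ∀ g, π g ζ = ζ) (g : G) :
    π g ξ - ξ ∈ Kᗮ := fun ζ hζ => by
  have h := (π g).inner_map_map ζ ξ
  rw [hK ζ hζ g] at h
  rw [inner_sub_right, h, sub_self]

theorem sub_mem_orthogonal_of_mem_closedConvexHull_orbit {K : Submodule ℂ H}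
    (hK : ∀ ζ ∈ K, ∀ g, π g ζ = ζ) {η : H}
    (hη : η ∈ closedConvexHull ℝ (range fun h => π h ξ)) : ξ - η ∈ Kᗮ := by
  have h := sub_mem_of_mem_closedConvexHull (W := Kᗮ.restrictScalars ℝ)
    (Submodule.isClosed_orthogonal K)
    (by rintro _ ⟨g, rfl⟩; exact sub_apply_mem_orthogonal π ξ hK g) hη
  simpa using Kᗮ.neg_mem h

end UnitaryRepresentation

/-- Let `π` be a unitary representation of a group `G` on a complex Hilbert space `H`, and
let `K` be the subspace of `G`-fixed vectors. For `ξ ∈ H`, any element of minimal norm in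
the closed convex hull `C` of the orbit `{π(g)ξ}` is the orthogonal projection of `ξ` onto
`K` (i.e. it lies in `K` and `ξ - η ⊥ K`); in particular such a minimal-norm element exists,
is unique, and is `G`-fixed. -/
theorem minimal_norm_element_of_orbit_hull_is_projection
    (G : Type*) [Group G]
    (H : Type*) [NormedAddCommGroup H] [InnerProductSpace ℂ H] [CompleteSpace H]
    (π : G →* (H ≃ₗᵢ[ℂ] H))
    (K : Submodule ℂ H) (hK : ∀ ζ : H, ζ ∈ K ↔ ∀ g : G, π g ζ = ζ)
    (ξ : H) :
    (∀ η ∈ closure (convexHull ℝ (Set.range fun g : G => π g ξ)),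
       (∀ ζ ∈ closure (convexHull ℝ (Set.range fun g : G => π g ξ)), ‖η‖ ≤ ‖ζ‖) →
       η ∈ K ∧ ξ - η ∈ Kᗮ) ∧
    (∃! η : H, η ∈ closure (convexHull ℝ (Set.range fun g : G => π g ξ)) ∧
       ∀ ζ ∈ closure (convexHull ℝ (Set.range fun g : G => π g ξ)), ‖η‖ ≤ ‖ζ‖) := by
  have : InnerProductSpaceable H := InnerProductSpace.toInnerProductSpaceable ℂ
  rw [← closedConvexHull_eq_closure_convexHull]
  set C := closedConvexHull ℝ (range fun g => π g ξ)
  have hconv : Convex ℝ C := convex_closedConvexHull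
  obtain ⟨v, hvC, hvmin⟩ := hconv.exists_isMinOn_norm ⟨ξ, subset_closedConvexHull ⟨1, by simp⟩⟩
    isClosed_closedConvexHull.isComplete
  refine ⟨fun η hη hmin => ⟨?_, ?_⟩, v, ⟨hvC, hvmin⟩, fun w ⟨hwC, hwmin⟩ => ?_⟩
  · exact (hK η).2 (apply_eq_of_isMinOn_norm_closedConvexHull_orbit π ξ hη hmin)
  · exact sub_mem_orthogonal_of_mem_closedConvexHull_orbit π ξ (fun ζ hζ => (hK ζ).1 hζ) hη
  · exact hconv.eq_of_isMinOn_norm hwC hvC hwmin hvmin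
end
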